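/- Let d ≥ 3 be an integer and let 0 < δ < 1. Then there exist positive constants C_δ and c_δ, depending only on d and δ, such that for every nonnegative measurable function b on ℝ^d, every t > 0 and all x, y ∈ ℝ^d, one has ∫₀ᵗ ∫_{ℝ^d} G_{1−δ}(t−s, x, z) · b(z) · (|z−y|/s) · G₁(s, z, y) dz ds ≤ C_δ · N_t^{c_δ}(b) · G_{1−δ}(t, x, y). -/

import Mathlib

open MeasureTheory Real Set
open scoped ENNReal

/-- The Gaussian kernel `G_a(s,x,y) = s^{-d/2} exp(-a |x-y|^2 / (2s))`. -/
noncomputable def gaussG (d : ℕ) (a s : ℝ) (x y : EuclideanSpace ℝ (Fin d)) : ℝ :=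
  s ^ (-(d : ℝ) / 2) * Real.exp (-a * ‖x - y‖ ^ 2 / (2 * s))

/-- The Kato-type quantity `N_t^α(b) = sup_x ∫_0^t ∫ s^{-(d+1)/2} exp(-α|x-y|^2/s) b(y) dy ds`. -/
noncomputable def katoN (d : ℕ) (α t : ℝ) (b : EuclideanSpace ℝ (Fin d) → ℝ) : ℝ≥0∞ :=
  ⨆ x : EuclideanSpace ℝ (Fin d), ∫⁻ s in Set.Ioc (0 : ℝ) t,
    ∫⁻ y, ENNReal.ofReal (s ^ (-((d : ℝ) + 1) / 2) * Real.exp (-α * ‖x - y‖ ^ 2 / s) * b y)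

/-!
Split the time integral at `t / 2`. On each half the Gaussian whose time is at least `t / 2`
costs only `2 ^ (d / 2) t ^ (-d / 2)`, and the triangle inequality gives
`|x - y|² / t ≤ |x - z|² / (t - s) + |z - y|² / s`, which turns the product of the two
exponentials into `exp (-(1 - δ) |x - y|² / (2t))` with some exponent to spare. On `(0, t / 2]`
the spare exponent absorbs the drift `|z - y| / s` into `(8 / δ) s ^ (-1 / 2)` and leaves
`exp (-c |z - y|² / s)`; on `(t / 2, t]` one has `s ^ (-1 / 2) ≤ (t - s) ^ (-1 / 2)`, and a
sharper split of `|x - y|²` moves the spare exponent onto `|x - z|² / (t - s)`. Either way the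
remaining integral is one of those defining `N_t^c(b)`, with `c = δ (1 - δ) / 8`.
-/

noncomputable def katoKernel (d : ℕ) (α s : ℝ) (x y : EuclideanSpace ℝ (Fin d)) : ℝ :=
  s ^ (-((d : ℝ) + 1) / 2) * Real.exp (-α * ‖x - y‖ ^ 2 / s)

theorem mul_sq_le_of_le_add {A B C u v w : ℝ} (hA : 0 < A) (hB : 0 < B) (hw : 0 ≤ w)
    (h : w ≤ u + v) (hC : C * (A + B) ≤ A * B) : C * w ^ 2 ≤ A * u ^ 2 + B * v ^ 2 := by
  have hsq : w ^ 2 ≤ (u + v) ^ 2 := pow_le_pow_left₀ hw h 2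
  refine le_of_mul_le_mul_left ?_ (add_pos hA hB)
  calc (A + B) * (C * w ^ 2) = C * (A + B) * w ^ 2 := by ring
    _ ≤ A * B * (u + v) ^ 2 := mul_le_mul hC hsq (sq_nonneg w) (mul_pos hA hB).le
    _ ≤ (A + B) * (A * u ^ 2 + B * v ^ 2) := by nlinarith [sq_nonneg (A * u - B * v)]

theorem div_mul_exp_neg_le {ε s v : ℝ} (hε : 0 < ε) (hε1 : ε ≤ 1) (hs : 0 < s) (hv : 0 ≤ v) :
    v / s * exp (-(ε * (v ^ 2 / s))) ≤ ε⁻¹ * s ^ (-(1 : ℝ) / 2) := by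
  set r := v / √s
  have hsqrt : 0 < √s := sqrt_pos.mpr hs
  have hr : 0 ≤ r := div_nonneg hv hsqrt.le
  have hrs : v ^ 2 / s = r ^ 2 := by rw [div_pow, sq_sqrt hs.le]
  have hvs : v / s = r * s ^ (-(1 : ℝ) / 2) := by
    rw [neg_div, rpow_neg hs.le, ← sqrt_eq_rpow, ← div_eq_mul_inv, div_div, mul_self_sqrt hs.le]
  have hcore : r ≤ ε⁻¹ * exp (ε * r ^ 2) := by
    rw [le_inv_mul_iff₀ hε]
    nlinarith [add_one_le_exp (ε * r ^ 2), mul_nonneg hε.le (sq_nonneg (r - 1))]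
  rw [hrs, hvs, exp_neg]
  calc r * s ^ (-(1 : ℝ) / 2) * (exp (ε * r ^ 2))⁻¹
      = r * (exp (ε * r ^ 2))⁻¹ * s ^ (-(1 : ℝ) / 2) := by ring
    _ ≤ ε⁻¹ * s ^ (-(1 : ℝ) / 2) := by
      gcongr
      rwa [mul_inv_le_iff₀ (exp_pos _)]

theorem rpow_le_two_rpow_neg_mul_of_half_le {p r t : ℝ} (ht : 0 < t) (hr : t / 2 ≤ r)
    (hp : p ≤ 0) : r ^ p ≤ 2 ^ (-p) * t ^ p := by
  calc r ^ p ≤ (t / 2) ^ p := rpow_le_rpow_of_nonpos (by positivity) hr hp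
    _ = 2 ^ (-p) * t ^ p := by
      rw [div_rpow ht.le zero_le_two, rpow_neg zero_le_two]; ring

variable {δ s t u v w : ℝ}

theorem gaussExponent_le_of_lt (hδ : δ ∈ Ioo 0 1) (hs : 0 < s) (hst : s < t)
    (hw : 0 ≤ w) (htri : w ≤ u + v) :
    -(1 - δ) * u ^ 2 / (2 * (t - s)) + -1 * v ^ 2 / (2 * s) + δ / 8 * (v ^ 2 / s) ≤
      -(1 - δ) * w ^ 2 / (2 * t) + -(δ * (1 - δ) / 8) * v ^ 2 / s := by
  obtain ⟨hδ0, hδ1⟩ := hδ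
  have hτ : 0 < t - s := by linarith
  have ht : t ≠ 0 := by linarith
  have key : 1 / t * w ^ 2 ≤ 1 / (t - s) * u ^ 2 + 1 / s * v ^ 2 :=
    mul_sq_le_of_le_add (by positivity) (by positivity) hw htri <| le_of_eq <| by
      field_simp; ring
  have hV : 0 ≤ v ^ 2 / s := by positivity
  generalize t - s = τ at key ⊢
  linear_combination ((1 - δ) / 2) * key + (δ / 4 + δ ^ 2 / 8) * hV

theorem gaussExponent_le_of_half_le (hδ : δ ∈ Ioo 0 1) (hts : t / 2 ≤ s) (hst : s < t)
    (hw : 0 ≤ w) (htri : w ≤ u + v) :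
    -(1 - δ) * u ^ 2 / (2 * (t - s)) + -1 * v ^ 2 / (2 * s) + δ / 8 * (v ^ 2 / s) ≤
      -(1 - δ) * w ^ 2 / (2 * t) + -(δ * (1 - δ) / 8) * u ^ 2 / (t - s) := by
  obtain ⟨hδ0, hδ1⟩ := hδ
  have hτ : 0 < t - s := by linarith
  have hs : 0 < s := by linarith
  have ht : 0 < t := by linarith
  have ha : 0 < 1 - δ := by linarith
  have hm : 0 < 1 - δ / 4 := by linarith
  -- the side condition reduces to `(1 - δ) s + (t - s) ≤ (1 - δ / 4) t`, i.e. to `s ≥ t / 4`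
  have key : (1 - δ) / t * w ^ 2 ≤
      (1 - δ) * (1 - δ / 4) / (t - s) * u ^ 2 + (1 - δ / 4) / s * v ^ 2 := by
    refine mul_sq_le_of_le_add (div_pos (mul_pos ha hm) hτ) (div_pos hm hs) hw htri ?_
    rw [div_add_div _ _ hτ.ne' hs.ne', div_mul_div_comm, div_mul_div_comm,
      div_le_div_iff₀ (by positivity) (by positivity)]
    nlinarith [mul_nonneg (mul_nonneg (mul_nonneg (mul_nonneg ha.le hm.le) hτ.le) hs.le)
      (mul_nonneg hδ0.le (by linarith : (0 : ℝ) ≤ s - t / 4))]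
  generalize t - s = τ at key ⊢
  linear_combination (1 / 2) * key

variable {d : ℕ} {x y z : EuclideanSpace ℝ (Fin d)}

theorem gaussG_mul_div_mul_gaussG_eq (ε : ℝ) :
    gaussG d (1 - δ) (t - s) x z * (‖z - y‖ / s) * gaussG d 1 s z y =
      (t - s) ^ (-(d : ℝ) / 2) * s ^ (-(d : ℝ) / 2) *
        (‖z - y‖ / s * exp (-(ε * (‖z - y‖ ^ 2 / s)))) *
        exp (-(1 - δ) * ‖x - z‖ ^ 2 / (2 * (t - s)) + -1 * ‖z - y‖ ^ 2 / (2 * s) +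
          ε * (‖z - y‖ ^ 2 / s)) := by
  have hsplit : ∀ A B : ℝ, exp A * exp B = exp (-(ε * (‖z - y‖ ^ 2 / s))) *
      exp (A + B + ε * (‖z - y‖ ^ 2 / s)) := fun A B ↦ by
    rw [← exp_add, ← exp_add]; ring_nf
  simp only [gaussG]
  linear_combination ((t - s) ^ (-(d : ℝ) / 2) * s ^ (-(d : ℝ) / 2) * (‖z - y‖ / s)) *
    hsplit (-(1 - δ) * ‖x - z‖ ^ 2 / (2 * (t - s))) (-1 * ‖z - y‖ ^ 2 / (2 * s))

theorem katoKernel_eq_rpow_mul_rpow_mul_exp (α : ℝ) (hs : 0 < s) :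
    katoKernel d α s x y =
      s ^ (-(d : ℝ) / 2) * s ^ (-(1 : ℝ) / 2) * exp (-α * ‖x - y‖ ^ 2 / s) := by
  rw [katoKernel, ← rpow_add hs]
  ring_nf

theorem rpow_neg_div_two_le_of_half_le (ht : 0 < t) (h : t / 2 ≤ s) :
    s ^ (-(d : ℝ) / 2) ≤ 2 ^ ((d : ℝ) / 2) * t ^ (-(d : ℝ) / 2) := by
  simpa only [neg_div, neg_neg] using
    rpow_le_two_rpow_neg_mul_of_half_le ht h (neg_nonpos.mpr (by positivity))

theorem gaussG_mul_div_mul_gaussG_le_of_le_half (hδ : δ ∈ Ioo 0 1) (hs : 0 < s)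
    (hst : s ≤ t / 2) :
    gaussG d (1 - δ) (t - s) x z * (‖z - y‖ / s) * gaussG d 1 s z y ≤
      2 ^ ((d : ℝ) / 2) * (8 / δ) * gaussG d (1 - δ) t x y *
        katoKernel d (δ * (1 - δ) / 8) s y z := by
  have ht : 0 < t := by linarith
  have hδ0 : 0 < δ := hδ.1
  have htri : ‖x - y‖ ≤ ‖x - z‖ + ‖z - y‖ := norm_sub_le_norm_sub_add_norm_sub x z y
  have hprefactor := rpow_neg_div_two_le_of_half_le (d := d) ht (by linarith : t / 2 ≤ t - s)
  have hdrift := div_mul_exp_neg_le (by positivity : 0 < δ / 8) (by linarith [hδ.2])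
    hs (norm_nonneg (z - y))
  have hexp := gaussExponent_le_of_lt hδ hs (by linarith : s < t) (norm_nonneg _) htri
  rw [inv_div] at hdrift
  rw [gaussG_mul_div_mul_gaussG_eq (δ / 8), katoKernel_eq_rpow_mul_rpow_mul_exp _ hs,
    norm_sub_rev y z]
  calc _ ≤ 2 ^ ((d : ℝ) / 2) * t ^ (-(d : ℝ) / 2) * s ^ (-(d : ℝ) / 2) *
        (8 / δ * s ^ (-(1 : ℝ) / 2)) *
        exp (-(1 - δ) * ‖x - y‖ ^ 2 / (2 * t) + -(δ * (1 - δ) / 8) * ‖z - y‖ ^ 2 / s) := by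
        gcongr
    _ = _ := by rw [exp_add, gaussG]; ring

theorem gaussG_mul_div_mul_gaussG_le_of_half_le (hδ : δ ∈ Ioo 0 1) (hts : t / 2 ≤ s)
    (hst : s < t) :
    gaussG d (1 - δ) (t - s) x z * (‖z - y‖ / s) * gaussG d 1 s z y ≤
      2 ^ ((d : ℝ) / 2) * (8 / δ) * gaussG d (1 - δ) t x y *
        katoKernel d (δ * (1 - δ) / 8) (t - s) x z := by
  have hτ : 0 < t - s := by linarith
  have hs : 0 < s := by linarith
  have ht : 0 < t := by linarith
  have hδ0 : 0 < δ := hδ.1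
  have htri : ‖x - y‖ ≤ ‖x - z‖ + ‖z - y‖ := norm_sub_le_norm_sub_add_norm_sub x z y
  have hprefactor := rpow_neg_div_two_le_of_half_le (d := d) (by linarith) hts
  have hdrift := div_mul_exp_neg_le (by positivity : 0 < δ / 8) (by linarith [hδ.2])
    hs (norm_nonneg (z - y))
  have hsqrt : s ^ (-(1 : ℝ) / 2) ≤ (t - s) ^ (-(1 : ℝ) / 2) :=
    rpow_le_rpow_of_nonpos hτ (by linarith) (by norm_num)
  have hexp := gaussExponent_le_of_half_le hδ hts hst (norm_nonneg _) htri
  rw [inv_div] at hdrift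
  replace hdrift := hdrift.trans (mul_le_mul_of_nonneg_left hsqrt (by positivity))
  rw [gaussG_mul_div_mul_gaussG_eq (δ / 8), katoKernel_eq_rpow_mul_rpow_mul_exp _ hτ]
  generalize t - s = τ at *
  calc _ ≤ τ ^ (-(d : ℝ) / 2) * (2 ^ ((d : ℝ) / 2) * t ^ (-(d : ℝ) / 2)) *
        (8 / δ * τ ^ (-(1 : ℝ) / 2)) *
        exp (-(1 - δ) * ‖x - y‖ ^ 2 / (2 * t) + -(δ * (1 - δ) / 8) * ‖x - z‖ ^ 2 / τ) := by
        gcongr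
    _ = _ := by rw [exp_add, gaussG]; ring

theorem lintegral_ofReal_le_ofReal_mul {α : Type*} [MeasurableSpace α] {μ : Measure α}
    {f g : α → ℝ} {C : ℝ} (hC : 0 ≤ C) (h : ∀ z, f z ≤ C * g z) :
    ∫⁻ z, ENNReal.ofReal (f z) ∂μ ≤ ENNReal.ofReal C * ∫⁻ z, ENNReal.ofReal (g z) ∂μ := by
  rw [← lintegral_const_mul' _ _ ENNReal.ofReal_ne_top]
  exact lintegral_mono fun z ↦ (ENNReal.ofReal_le_ofReal (h z)).trans (ENNReal.ofReal_mul hC).le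

theorem setLIntegral_katoKernel_le_katoN (α : ℝ) (b : EuclideanSpace ℝ (Fin d) → ℝ)
    (x : EuclideanSpace ℝ (Fin d)) (hst : s ≤ t) :
    ∫⁻ r in Ioc 0 s, ∫⁻ y, ENNReal.ofReal (katoKernel d α r x y * b y) ≤ katoN d α t b :=
  (lintegral_mono_set (Ioc_subset_Ioc_right hst)).trans
    (le_iSup (fun x ↦ ∫⁻ r in Ioc 0 t, ∫⁻ y, ENNReal.ofReal (katoKernel d α r x y * b y)) x)

theorem gaussG_nonneg (a : ℝ) (ht : 0 ≤ t) (x y : EuclideanSpace ℝ (Fin d)) :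
    0 ≤ gaussG d a t x y := by
  unfold gaussG; positivity

variable {b : EuclideanSpace ℝ (Fin d) → ℝ}

theorem setLIntegral_Ioc_zero_half_gaussG_drift_le (hδ : δ ∈ Ioo 0 1) (ht : 0 ≤ t)
    (hb : ∀ z, 0 ≤ b z) :
    ∫⁻ s in Ioc 0 (t / 2), ∫⁻ z, ENNReal.ofReal
        (gaussG d (1 - δ) (t - s) x z * b z * (‖z - y‖ / s) * gaussG d 1 s z y) ≤
      ENNReal.ofReal (2 ^ ((d : ℝ) / 2) * (8 / δ) * gaussG d (1 - δ) t x y) *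
        katoN d (δ * (1 - δ) / 8) t b := by
  have hC : 0 ≤ 2 ^ ((d : ℝ) / 2) * (8 / δ) * gaussG d (1 - δ) t x y := by
    have := hδ.1; have := gaussG_nonneg (1 - δ) ht x y; positivity
  calc _ ≤ ∫⁻ s in Ioc 0 (t / 2),
        ENNReal.ofReal (2 ^ ((d : ℝ) / 2) * (8 / δ) * gaussG d (1 - δ) t x y) *
          ∫⁻ z, ENNReal.ofReal (katoKernel d (δ * (1 - δ) / 8) s y z * b z) := by
        refine setLIntegral_mono' measurableSet_Ioc fun s ⟨hs, hst⟩ ↦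
          lintegral_ofReal_le_ofReal_mul hC fun z ↦ ?_
        have := mul_le_mul_of_nonneg_right
          (gaussG_mul_div_mul_gaussG_le_of_le_half (x := x) (y := y) (z := z) hδ hs hst) (hb z)
        linear_combination this
    _ ≤ _ := by
      rw [lintegral_const_mul' _ _ ENNReal.ofReal_ne_top]
      gcongr
      exact setLIntegral_katoKernel_le_katoN _ b y (half_le_self ht)

theorem setLIntegral_Ioc_half_gaussG_drift_le (hδ : δ ∈ Ioo 0 1) (ht : 0 ≤ t)
    (hb : ∀ z, 0 ≤ b z) :
    ∫⁻ s in Ioc (t / 2) t, ∫⁻ z, ENNReal.ofReal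
        (gaussG d (1 - δ) (t - s) x z * b z * (‖z - y‖ / s) * gaussG d 1 s z y) ≤
      ENNReal.ofReal (2 ^ ((d : ℝ) / 2) * (8 / δ) * gaussG d (1 - δ) t x y) *
        katoN d (δ * (1 - δ) / 8) t b := by
  have hC : 0 ≤ 2 ^ ((d : ℝ) / 2) * (8 / δ) * gaussG d (1 - δ) t x y := by
    have := hδ.1; have := gaussG_nonneg (1 - δ) ht x y; positivity
  set K : ℝ → ℝ≥0∞ := fun r ↦ ∫⁻ z, ENNReal.ofReal (katoKernel d (δ * (1 - δ) / 8) r x z * b z)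
  have hreflect : ∫⁻ s in Ioo (t / 2) t, K (t - s) = ∫⁻ r in Ioo 0 (t / 2), K r := by
    have hpre : (fun s ↦ t - s) ⁻¹' Ioo 0 (t / 2) = Ioo (t / 2) t := by
      ext s; simp only [mem_preimage, mem_Ioo]; constructor <;> rintro ⟨h1, h2⟩ <;>
        constructor <;> linarith
    rw [← hpre]
    exact (Measure.measurePreserving_sub_left volume t).setLIntegral_comp_preimage_emb
      (MeasurableEquiv.subLeft t).measurableEmbedding K _
  calc _ = ∫⁻ s in Ioo (t / 2) t, ∫⁻ z, ENNReal.ofReal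
        (gaussG d (1 - δ) (t - s) x z * b z * (‖z - y‖ / s) * gaussG d 1 s z y) :=
        setLIntegral_congr Ioo_ae_eq_Ioc.symm
    _ ≤ ∫⁻ s in Ioo (t / 2) t,
        ENNReal.ofReal (2 ^ ((d : ℝ) / 2) * (8 / δ) * gaussG d (1 - δ) t x y) * K (t - s) := by
        refine setLIntegral_mono' measurableSet_Ioo fun s ⟨hts, hst⟩ ↦
          lintegral_ofReal_le_ofReal_mul hC fun z ↦ ?_
        have := mul_le_mul_of_nonneg_right
          (gaussG_mul_div_mul_gaussG_le_of_half_le (x := x) (y := y) (z := z) hδ hts.le hst) (hb z)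
        linear_combination this
    _ ≤ _ := by
      rw [lintegral_const_mul' _ _ ENNReal.ofReal_ne_top, hreflect,
        setLIntegral_congr Ioo_ae_eq_Ioc]
      gcongr
      exact setLIntegral_katoKernel_le_katoN _ b x (half_le_self ht)

theorem stmt9_general (d : ℕ) (δ : ℝ) (hδ : δ ∈ Set.Ioo (0 : ℝ) 1) :
    ∃ Cδ > (0 : ℝ), ∃ cδ > (0 : ℝ), ∀ b : EuclideanSpace ℝ (Fin d) → ℝ,
      Measurable b → (∀ z, 0 ≤ b z) → ∀ t > (0 : ℝ), ∀ x y : EuclideanSpace ℝ (Fin d),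
        (∫⁻ s in Set.Ioc (0 : ℝ) t, ∫⁻ z,
            ENNReal.ofReal
              (gaussG d (1 - δ) (t - s) x z * b z * (‖z - y‖ / s) * gaussG d 1 s z y))
          ≤ ENNReal.ofReal Cδ * katoN d cδ t b * ENNReal.ofReal (gaussG d (1 - δ) t x y) := by
  set C : ℝ := 2 ^ ((d : ℝ) / 2) * (8 / δ)
  have hC : 0 < C := by have := hδ.1; positivity
  refine ⟨2 * C, by positivity, δ * (1 - δ) / 8,
    div_pos (mul_pos hδ.1 (sub_pos.2 hδ.2)) (by norm_num), ?_⟩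
  intro b _ hb t ht x y
  rw [← Ioc_union_Ioc_eq_Ioc (half_pos ht).le (half_le_self ht.le),
    lintegral_union measurableSet_Ioc (Ioc_disjoint_Ioc_of_le le_rfl)]
  calc _ ≤ ENNReal.ofReal (C * gaussG d (1 - δ) t x y) * katoN d (δ * (1 - δ) / 8) t b +
        ENNReal.ofReal (C * gaussG d (1 - δ) t x y) * katoN d (δ * (1 - δ) / 8) t b :=
        add_le_add (setLIntegral_Ioc_zero_half_gaussG_drift_le hδ ht.le hb)
          (setLIntegral_Ioc_half_gaussG_drift_le hδ ht.le hb)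
    _ = _ := by
      rw [ENNReal.ofReal_mul hC.le, ENNReal.ofReal_mul zero_le_two, ENNReal.ofReal_ofNat]
      ring

theorem stmt9 (d : ℕ) (hd : 3 ≤ d) (δ : ℝ) (hδ : δ ∈ Set.Ioo (0 : ℝ) 1) :
    ∃ Cδ > (0 : ℝ), ∃ cδ > (0 : ℝ), ∀ b : EuclideanSpace ℝ (Fin d) → ℝ,
      Measurable b → (∀ z, 0 ≤ b z) → ∀ t > (0 : ℝ), ∀ x y : EuclideanSpace ℝ (Fin d),
        (∫⁻ s in Set.Ioc (0 : ℝ) t, ∫⁻ z,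
            ENNReal.ofReal
              (gaussG d (1 - δ) (t - s) x z * b z * (‖z - y‖ / s) * gaussG d 1 s z y))
          ≤ ENNReal.ofReal Cδ * katoN d cδ t b * ENNReal.ofReal (gaussG d (1 - δ) t x y) :=
  stmt9_general d δ hδ
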